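/- arXiv:1702.07930 — 4 statements merged into one kernel-verified Lean document; each statement's English description precedes it below -/
import Mathlib

section
/- The following four claims are equivalent: (a) there exists x⋄ ∈ X⋄ with 0 ∈ ∇L(x⋄) + N_C(x⋄); (b) X⋄ ∩ X₀ ≠ ∅; (c) X⋄ ⊆ X₀; (d) X₀ ∩ Q ≠ ∅ (i.e., U = 0). Here X₀ = {x ∈ C : L(x) ≤ L(χ) for all χ ∈ C} is the set of minimizers of L over C; when these equivalent conditions hold, sparse signal regularization is irrelevant. -/
open Matrix
open scoped RealInnerProductSpace ENNReal

noncomputable section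

def cnorm1 {n : ℕ} (z : Fin n → ℂ) : ℝ := ∑ j, ‖z j‖

noncomputable def cnormInf {n : ℕ} (z : Fin n → ℂ) : ℝ := ⨆ j, ‖z j‖

def psiH {p p' : ℕ} (Ψ : Matrix (Fin p) (Fin p') ℂ) (x : EuclideanSpace ℝ (Fin p)) :
    Fin p' → ℂ :=
  Matrix.mulVec Ψᴴ fun i => (x i : ℂ)

def rePsi {p p' : ℕ} (Ψ : Matrix (Fin p) (Fin p') ℂ) (w : Fin p' → ℂ) :
    EuclideanSpace ℝ (Fin p) :=
  WithLp.toLp 2 (fun i => (Matrix.mulVec Ψ w i).re)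

def Gset {n : ℕ} (s : Fin n → ℂ) : Set (Fin n → ℂ) :=
  {w | ∀ j, ‖w j‖ ≤ 1 ∧ (s j ≠ 0 → w j = s j / ((‖s j‖ : ℝ) : ℂ))}

def normalCone {p : ℕ} (C : Set (EuclideanSpace ℝ (Fin p))) (x : EuclideanSpace ℝ (Fin p)) :
    Set (EuclideanSpace ℝ (Fin p)) :=
  {a | ∀ y ∈ C, ⟪a, y - x⟫ ≤ 0}

def XuSet {p p' : ℕ} (C : Set (EuclideanSpace ℝ (Fin p))) (L : EuclideanSpace ℝ (Fin p) → ℝ)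
    (Ψ : Matrix (Fin p) (Fin p') ℂ) (u : ℝ) : Set (EuclideanSpace ℝ (Fin p)) :=
  {x ∈ C | ∀ χ ∈ C, L x + u * cnorm1 (psiH Ψ x) ≤ L χ + u * cnorm1 (psiH Ψ χ)}

def QSet {p p' : ℕ} (C : Set (EuclideanSpace ℝ (Fin p))) (Ψ : Matrix (Fin p) (Fin p') ℂ) :
    Set (EuclideanSpace ℝ (Fin p)) :=
  {x ∈ C | ∀ χ ∈ C, cnorm1 (psiH Ψ x) ≤ cnorm1 (psiH Ψ χ)}

def XdSet {p p' : ℕ} (C : Set (EuclideanSpace ℝ (Fin p))) (L : EuclideanSpace ℝ (Fin p) → ℝ)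
    (Ψ : Matrix (Fin p) (Fin p') ℂ) : Set (EuclideanSpace ℝ (Fin p)) :=
  {x ∈ QSet C Ψ | ∀ χ ∈ QSet C Ψ, L x ≤ L χ}

def Ubound {p p' : ℕ} (C : Set (EuclideanSpace ℝ (Fin p))) (L : EuclideanSpace ℝ (Fin p) → ℝ)
    (Ψ : Matrix (Fin p) (Fin p') ℂ) : ℝ≥0∞ :=
  sInf (ENNReal.ofReal '' {u : ℝ | 0 ≤ u ∧ (XuSet C L Ψ u ∩ QSet C Ψ).Nonempty})


/-- The set of minimizers of `L` over `C` (i.e. `X₀`). -/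
def X0Set {p : ℕ} (C : Set (EuclideanSpace ℝ (Fin p))) (L : EuclideanSpace ℝ (Fin p) → ℝ) :
    Set (EuclideanSpace ℝ (Fin p)) :=
  {x ∈ C | ∀ χ ∈ C, L x ≤ L χ}

/-!
Everything rests on the first-order characterization of `X₀`: for `L` convex and differentiable
and `C` convex, `x ∈ C` minimizes `L` over `C` iff `-∇L(x) ∈ N_C(x)`. Besides, all points of `X⋄`
share the same value of `L`, so one of them minimizes `L` over `C` iff all of them do, and a
minimizer of `L` over `C` that lies in `Q` is automatically in `X⋄`.
-/

open Set

section FirstOrder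

variable {E : Type*} [NormedAddCommGroup E] [NormedSpace ℝ E] {s : Set E} {f : E → ℝ}
  {f' : E →L[ℝ] ℝ} {x y : E}

/-- Restricting `f` to the segment `[x, y]` reduces this to the one-variable inequality
between the derivative at `0` and the slope on `[0, 1]`. -/
theorem ConvexOn.add_fderiv_sub_le (hf : ConvexOn ℝ s f) (hx : x ∈ s) (hy : y ∈ s)
    (hf' : HasFDerivAt f f' x) : f x + f' (y - x) ≤ f y := by
  let ℓ : ℝ →ᵃ[ℝ] E := AffineMap.lineMap x y
  have hℓ : ConvexOn ℝ (ℓ ⁻¹' s) (f ∘ ℓ) := hf.comp_affineMap ℓ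
  have hderiv : HasDerivAt (f ∘ ℓ) (f' (y - x)) 0 := by
    have hf'0 : HasFDerivAt f f' (ℓ 0) := by simpa [ℓ] using hf'
    exact hf'0.comp_hasDerivAt (0 : ℝ) AffineMap.hasDerivAt_lineMap
  have hslope := hℓ.le_slope_of_hasDerivAt (x := 0) (y := 1) (by simpa [ℓ] using hx)
    (by simpa [ℓ] using hy) zero_lt_one hderiv
  simp only [slope_def_field, Function.comp_apply, ℓ, AffineMap.lineMap_apply_one,
    AffineMap.lineMap_apply_zero, sub_zero, div_one] at hslope
  linarith

theorem IsMinOn.fderiv_sub_nonneg (hs : Convex ℝ s) (hmin : IsMinOn f s x) (hx : x ∈ s)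
    (hy : y ∈ s) (hf' : HasFDerivWithinAt f f' s x) : 0 ≤ f' (y - x) :=
  hmin.localize.hasFDerivWithinAt_nonneg hf'
    (sub_mem_posTangentConeAt_of_segment_subset (hs.segment_subset hx hy))

theorem ConvexOn.isMinOn_iff_fderiv_sub_nonneg (hf : ConvexOn ℝ s f) (hx : x ∈ s)
    (hf' : HasFDerivAt f f' x) : IsMinOn f s x ↔ ∀ y ∈ s, 0 ≤ f' (y - x) :=
  ⟨fun hmin _ hy => hmin.fderiv_sub_nonneg hf.1 hx hy hf'.hasFDerivWithinAt,
    fun h y hy => show f x ≤ f y by linarith [hf.add_fderiv_sub_le hx hy hf', h y hy]⟩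

end FirstOrder

theorem mem_X0Set_iff_neg_mem_normalCone {p : ℕ} {C : Set (EuclideanSpace ℝ (Fin p))}
    {L : EuclideanSpace ℝ (Fin p) → ℝ} {g x : EuclideanSpace ℝ (Fin p)}
    (hL : ConvexOn ℝ C L) (hg : HasGradientAt L g x) (hx : x ∈ C) :
    x ∈ X0Set C L ↔ -g ∈ normalCone C x := by
  have hmin := hL.isMinOn_iff_fderiv_sub_nonneg hx hg.hasFDerivAt
  simp only [InnerProductSpace.toDual_apply_apply] at hmin
  simp only [X0Set, normalCone, mem_ofPred_eq, inner_neg_left, neg_nonpos, ← hmin, isMinOn_iff,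
    hx, true_and]

theorem X0Set_inter_QSet_subset_XdSet {p p' : ℕ} (C : Set (EuclideanSpace ℝ (Fin p)))
    (L : EuclideanSpace ℝ (Fin p) → ℝ) (Ψ : Matrix (Fin p) (Fin p') ℂ) :
    X0Set C L ∩ QSet C Ψ ⊆ XdSet C L Ψ :=
  fun _ ⟨hx0, hxQ⟩ => ⟨hxQ, fun χ hχ => hx0.2 χ hχ.1⟩

theorem XdSet_subset_X0Set_of_mem {p p' : ℕ} {C : Set (EuclideanSpace ℝ (Fin p))}
    {L : EuclideanSpace ℝ (Fin p) → ℝ} {Ψ : Matrix (Fin p) (Fin p') ℂ}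
    {x : EuclideanSpace ℝ (Fin p)} (hxd : x ∈ XdSet C L Ψ) (hx0 : x ∈ X0Set C L) :
    XdSet C L Ψ ⊆ X0Set C L :=
  fun _ hyd => ⟨hyd.1.1, fun χ hχ => (hyd.2 x hxd.1).trans (hx0.2 χ hχ)⟩

theorem statement_2_general {p p' : ℕ}
    (C : Set (EuclideanSpace ℝ (Fin p)))
    (hCcv : Convex ℝ C)
    (L : EuclideanSpace ℝ (Fin p) → ℝ) (hLcv : ConvexOn ℝ Set.univ L)
    (gradL : EuclideanSpace ℝ (Fin p) → EuclideanSpace ℝ (Fin p))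
    (hLd : ∀ x, HasGradientAt L (gradL x) x)
    (Ψ : Matrix (Fin p) (Fin p') ℂ) (hXd : (XdSet C L Ψ).Nonempty) :
    [ (∃ x ∈ XdSet C L Ψ, ∃ a ∈ normalCone C x, gradL x + a = 0),
      (XdSet C L Ψ ∩ X0Set C L).Nonempty,
      XdSet C L Ψ ⊆ X0Set C L,
      (X0Set C L ∩ QSet C Ψ).Nonempty ].TFAE := by
  have hX0 : ∀ x ∈ C, x ∈ X0Set C L ↔ -gradL x ∈ normalCone C x := fun x hx =>
    mem_X0Set_iff_neg_mem_normalCone (hLcv.subset (subset_univ C) hCcv) (hLd x) hx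
  tfae_have 1 ↔ 2 := by
    constructor
    · rintro ⟨x, hxd, a, ha, hsum⟩
      rw [← neg_eq_of_add_eq_zero_right hsum, ← hX0 x hxd.1.1] at ha
      exact ⟨x, hxd, ha⟩
    · rintro ⟨x, hxd, hx0⟩
      exact ⟨x, hxd, -gradL x, (hX0 x hxd.1.1).1 hx0, add_neg_cancel _⟩
  tfae_have 2 → 3 := fun ⟨_, hxd, hx0⟩ => XdSet_subset_X0Set_of_mem hxd hx0
  tfae_have 3 → 4 := fun h => hXd.imp fun _ hxd => ⟨h hxd, hxd.1⟩
  tfae_have 4 → 2 := fun ⟨x, hx⟩ => ⟨x, X0Set_inter_QSet_subset_XdSet C L Ψ hx, hx.1⟩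
  tfae_finish

theorem statement_2 {p p' : ℕ} (hp : 0 < p) (hp' : 0 < p')
    (C : Set (EuclideanSpace ℝ (Fin p))) (hCne : C.Nonempty) (hCcl : IsClosed C)
    (hCcv : Convex ℝ C)
    (L : EuclideanSpace ℝ (Fin p) → ℝ) (hLcv : ConvexOn ℝ Set.univ L)
    (gradL : EuclideanSpace ℝ (Fin p) → EuclideanSpace ℝ (Fin p))
    (hLd : ∀ x, HasGradientAt L (gradL x) x)
    (hLb : BddBelow (L '' C))
    (Ψ : Matrix (Fin p) (Fin p') ℂ) (hXd : (XdSet C L Ψ).Nonempty) :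
    [ (∃ x ∈ XdSet C L Ψ, ∃ a ∈ normalCone C x, gradL x + a = 0),
      (XdSet C L Ψ ∩ X0Set C L).Nonempty,
      XdSet C L Ψ ⊆ X0Set C L,
      (X0Set C L ∩ QSet C Ψ).Nonempty ].TFAE :=
  statement_2_general C hCcv L hLcv gradL hLd Ψ hXd
end
end

section
/- (Theorem 1) Assume there exists x̄ ∈ C with Ψ^H x̄ = 0 and that X⋄ ≠ ∅. Let d ≥ 1 be the dimension of the real subspace Re(R(Ψ)) = {Re(Ψ w) : w ∈ ℂ^{p'}}, and let Ψ = F Z where F is a real p × d matrix of rank d and Z is a complex d × p' matrix whose real d × 2p' matrix [Re Z Im Z] has rank d. Define F⁺ = (Fᵀ F)⁻¹ Fᵀ and Z^‡ = Z^H (Re(Z Z^H))⁻¹ (Re(Z Z^H) is invertible). For x⋄ ∈ X⋄ define U₀(x⋄) = inf { ‖t + Z^‡ (F⁺(∇L(x⋄) + a) − Re(Z t))‖_∞ : t ∈ ℂ^{p'}, a ∈ N_C(x⋄), ∇L(x⋄) + a ∈ column space of F }, with inf over the empty set equal to +∞. Then U₀(x⋄) = U for every x⋄ ∈ X⋄;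 in particular U₀(x⋄) does not depend on the choice of x⋄ ∈ X⋄, and U = +∞ exactly when the constraint set is empty. -/
open Matrix
open scoped RealInnerProductSpace ENNReal

noncomputable section

/-- `F⁺ = (Fᵀ F)⁻¹ Fᵀ`, the Moore–Penrose inverse of a full-column-rank real matrix. -/
def Fpinv {p d : ℕ} (F : Matrix (Fin p) (Fin d) ℝ) : Matrix (Fin d) (Fin p) ℝ :=
  (Fᵀ * F)⁻¹ * Fᵀ

/-- `Z^‡ = Zᴴ (Re (Z Zᴴ))⁻¹`. -/
def Zddag {d p' : ℕ} (Z : Matrix (Fin d) (Fin p') ℂ) : Matrix (Fin p') (Fin d) ℂ :=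
  Zᴴ * (((Z * Zᴴ).map Complex.re)⁻¹.map Complex.ofReal)

/-- `p(x,a,t) = t + Z^‡ (F⁺(∇L(x)+a) − Re(Z t))`, with `g = ∇L(x)`. -/
def pvec {p p' d : ℕ} (F : Matrix (Fin p) (Fin d) ℝ) (Z : Matrix (Fin d) (Fin p') ℂ)
    (g a : EuclideanSpace ℝ (Fin p)) (t : Fin p' → ℂ) : Fin p' → ℂ :=
  t + (Zddag Z).mulVec fun i =>
    (((Fpinv F).mulVec (fun j => g j + a j) i - (Z.mulVec t i).re : ℝ) : ℂ)

/-!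
Since some feasible point has `Ψᴴ x̄ = 0`, `Q` is the set of feasible points with `Ψᴴ x = 0`,
and for `x⋄ ∈ X⋄` the set `X_u` meets `Q` exactly when `x⋄ ∈ X_u`. As `Ψᴴ x⋄ = 0`, the
optimality of `x⋄` for `L + u‖Ψᴴ ·‖₁` on `C` is equivalent to `∇L(x⋄) + a = Re (Ψ t)` for some
`a ∈ N_C(x⋄)` and some `t` with `‖t‖∞ ≤ u`: the vectors `Re (Ψ w)`, `‖w‖∞ ≤ 1`, are the
subgradients of `‖Ψᴴ ·‖₁` at `0`. Sufficiency is the gradient inequality. For necessity, separate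
the compact convex set `{-∇L(x⋄) + u Re (Ψ w)}` from the normal cone; by the bipolar theorem the
separating vector lies in the closed cone generated by `x⋄ - C`, where the directional derivative
of the objective is nonnegative, and testing it against the best `w` gives a contradiction.
Finally, for `Ψ = F Z` and `∇L(x⋄) + a ∈ range F`, the map
`t ↦ t + Z^‡ (F⁺ (∇L(x⋄) + a) - Re (Z t))` lands in the solutions of `Re (Ψ t) = ∇L(x⋄) + a` and
fixes them, so `U₀(x⋄)` is the infimum of `‖t‖∞` over those solutions, which is `U`.
-/

open scoped Topology

section ConvexAnalysis

variable {E : Type*} [NormedAddCommGroup E] [InnerProductSpace ℝ E] [CompleteSpace E]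

theorem HasDerivAt.nonneg_of_forall_Ioc_le {φ : ℝ → ℝ} {φ' : ℝ} (hφ : HasDerivAt φ φ' 0)
    (hmin : ∀ s ∈ Set.Ioc (0 : ℝ) 1, φ 0 ≤ φ s) : 0 ≤ φ' := by
  have hslope : Filter.Tendsto (slope φ 0) (𝓝[>] 0) (𝓝 φ') :=
    (hasDerivWithinAt_iff_tendsto_slope' (lt_irrefl 0)).1 hφ.hasDerivWithinAt
  refine ge_of_tendsto hslope ?_
  filter_upwards [Ioc_mem_nhdsGT zero_lt_one] with s hs
  rw [slope_def_field, sub_zero]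
  exact div_nonneg (sub_nonneg.2 (hmin s hs)) hs.1.le

theorem HasGradientAt.hasDerivAt_comp_lineMap {L : E → ℝ} {g x : E} (hL : HasGradientAt L g x)
    (v : E) : HasDerivAt (fun s : ℝ => L (x + s • v)) ⟪g, v⟫ 0 := by
  have h := hL.hasFDerivAt.hasLineDerivAt v
  rwa [InnerProductSpace.toDual_apply_apply] at h

theorem ConvexOn.add_inner_sub_le_of_hasGradientAt {L : E → ℝ} (hL : ConvexOn ℝ Set.univ L)
    {g x : E} (hg : HasGradientAt L g x) (y : E) : L x + ⟪g, y - x⟫ ≤ L y := by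
  have hderiv : HasDerivAt (fun s : ℝ => s * (L y - L x) - L (x + s • (y - x)))
      (L y - L x - ⟪g, y - x⟫) 0 := by
    simpa using ((hasDerivAt_id (0 : ℝ)).mul_const (L y - L x)).fun_sub
      (hg.hasDerivAt_comp_lineMap (y - x))
  have := hderiv.nonneg_of_forall_Ioc_le fun s hs => by
    have hconv := hL.2 (Set.mem_univ x) (Set.mem_univ y) (sub_nonneg.2 hs.2) hs.1.le
      (sub_add_cancel 1 s)
    rw [show (1 - s) • x + s • y = x + s • (y - x) by module, smul_eq_mul, smul_eq_mul] at hconv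
    simp only [zero_mul, zero_smul, add_zero, zero_sub]
    linarith
  linarith

theorem inner_sub_add_nonneg_of_forall_le {C : Set E} (hC : Convex ℝ C) {L ρ : E → ℝ}
    {g x y : E} {c : ℝ} (hg : HasGradientAt L g x) (hx : x ∈ C) (hy : y ∈ C)
    (hρ : ∀ s ∈ Set.Ioc (0 : ℝ) 1, ρ (x + s • (y - x)) ≤ ρ x + s * c)
    (hmin : ∀ χ ∈ C, L x + ρ x ≤ L χ + ρ χ) : 0 ≤ ⟪g, y - x⟫ + c := by
  have hderiv : HasDerivAt (fun s : ℝ => L (x + s • (y - x)) + s * c) (⟪g, y - x⟫ + c) 0 := by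
    simpa using (hg.hasDerivAt_comp_lineMap (y - x)).fun_add ((hasDerivAt_id (0 : ℝ)).mul_const c)
  refine hderiv.nonneg_of_forall_Ioc_le fun s hs => ?_
  have hmem : x + s • (y - x) ∈ C := by
    simpa [show x + s • (y - x) = (1 - s) • x + s • y by module] using
      hC hx hy (sub_nonneg.2 hs.2) hs.1.le (sub_add_cancel 1 s)
  have := hmin _ hmem
  have := hρ s hs
  simp only [zero_smul, add_zero, zero_mul]
  linarith

theorem innerDual_innerDual_subset_closure_hull {s : Set E} (h0 : (0 : E) ∈ s) :
    (ProperCone.innerDual (ProperCone.innerDual s : Set E) : Set E) ⊆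
      closure (ConvexCone.hull ℝ s : Set E) := by
  let P : ProperCone ℝ E :=
    ⟨(ConvexCone.hull ℝ s).closure.toPointedCone
      (subset_closure (ConvexCone.subset_hull h0)), isClosed_closure⟩
  have hsP : s ⊆ P := fun v hv => subset_closure (ConvexCone.subset_hull hv)
  calc (ProperCone.innerDual (ProperCone.innerDual s : Set E) : Set E)
      ⊆ ProperCone.innerDual (ProperCone.innerDual (P : Set E) : Set E) :=
        ProperCone.innerDual_le_innerDual (ProperCone.innerDual_le_innerDual hsP)
    _ = P := by rw [ProperCone.innerDual_innerDual]
    _ = closure (ConvexCone.hull ℝ s : Set E) := rfl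

theorem nonneg_on_innerDual_innerDual {s : Set E} (hs : Convex ℝ s) (h0 : (0 : E) ∈ s)
    {ψ : E → ℝ} (hψ : Continuous ψ) (hhom : ∀ c : ℝ, 0 < c → ∀ v, ψ (c • v) = c * ψ v)
    (hnonneg : ∀ v ∈ s, 0 ≤ ψ v) :
    ∀ v ∈ ProperCone.innerDual (ProperCone.innerDual s : Set E), 0 ≤ ψ v := by
  have hhull : (ConvexCone.hull ℝ s : Set E) ⊆ {v | 0 ≤ ψ v} := by
    rintro _ hmem
    obtain ⟨c, hc, v, hv, rfl⟩ := (ConvexCone.mem_hull_of_convex hs).1 hmem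
    simpa [hhom c hc v] using mul_nonneg hc.le (hnonneg v hv)
  exact fun v hv => closure_minimal hhull (isClosed_le continuous_const hψ)
    (innerDual_innerDual_subset_closure_hull h0 hv)

end ConvexAnalysis

theorem cnormInf_eq_norm {n : ℕ} (z : Fin n → ℂ) : cnormInf z = ‖z‖ :=
  le_antisymm (Real.iSup_le (norm_le_pi_norm z) (norm_nonneg z))
    ((pi_norm_le_iff_of_nonneg (Real.iSup_nonneg fun j => norm_nonneg (z j))).2
      fun j => le_ciSup (f := fun i => ‖z i‖) (Set.finite_range _).bddAbove j)

theorem cnorm1_eq_norm {n : ℕ} (z : Fin n → ℂ) : cnorm1 z = ‖WithLp.toLp 1 z‖ :=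
  (PiLp.norm_eq_of_L1 _).symm

theorem cnorm1_nonneg {n : ℕ} (z : Fin n → ℂ) : 0 ≤ cnorm1 z :=
  cnorm1_eq_norm z ▸ norm_nonneg _

theorem cnorm1_eq_zero {n : ℕ} {z : Fin n → ℂ} : cnorm1 z = 0 ↔ z = 0 := by
  rw [cnorm1_eq_norm, norm_eq_zero, WithLp.toLp_eq_zero]

theorem cnorm1_smul {n : ℕ} (c : ℝ) (z : Fin n → ℂ) : cnorm1 (c • z) = |c| * cnorm1 z := by
  rw [cnorm1_eq_norm, cnorm1_eq_norm, WithLp.toLp_smul, norm_smul, Real.norm_eq_abs]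

theorem continuous_cnorm1 {n : ℕ} : Continuous (cnorm1 : (Fin n → ℂ) → ℝ) := by
  simp only [funext cnorm1_eq_norm]
  exact continuous_norm.comp (PiLp.continuous_toLp 1 _)

section Psi

variable {p p' : ℕ} (Ψ : Matrix (Fin p) (Fin p') ℂ)

def psiHₗ : EuclideanSpace ℝ (Fin p) →ₗ[ℝ] (Fin p' → ℂ) where
  toFun := psiH Ψ
  map_add' x y := by
    simp only [psiH, PiLp.add_apply, Complex.ofReal_add, ← Matrix.mulVec_add]
    rfl
  map_smul' c x := by
    simp only [psiH, PiLp.smul_apply, smul_eq_mul, Complex.ofReal_mul, RingHom.id_apply]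
    rw [← Matrix.mulVec_smul]
    rfl

def rePsiₗ : (Fin p' → ℂ) →ₗ[ℝ] EuclideanSpace ℝ (Fin p) where
  toFun := rePsi Ψ
  map_add' w w' := by
    ext i
    simp [rePsi, Matrix.mulVec_add]
  map_smul' c w := by
    ext i
    simp [rePsi, Matrix.mulVec_smul]

@[simp] theorem psiHₗ_apply (x : EuclideanSpace ℝ (Fin p)) : psiHₗ Ψ x = psiH Ψ x := rfl

@[simp] theorem rePsiₗ_apply (w : Fin p' → ℂ) : rePsiₗ Ψ w = rePsi Ψ w := rfl

theorem continuous_cnorm1_psiH : Continuous fun x : EuclideanSpace ℝ (Fin p) =>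
    cnorm1 (psiH Ψ x) :=
  continuous_cnorm1.comp (psiHₗ Ψ).continuous_of_finiteDimensional

theorem cnorm1_psiH_smul (c : ℝ) (x : EuclideanSpace ℝ (Fin p)) :
    cnorm1 (psiH Ψ (c • x)) = |c| * cnorm1 (psiH Ψ x) := by
  rw [← psiHₗ_apply, map_smul, cnorm1_smul, psiHₗ_apply]

theorem inner_rePsi (w : Fin p' → ℂ) (v : EuclideanSpace ℝ (Fin p)) :
    ⟪rePsi Ψ w, v⟫ = ∑ j, (w j * starRingEnd ℂ (psiH Ψ v j)).re := by
  simp only [PiLp.inner_apply, RCLike.inner_apply, conj_trivial, rePsi, psiH, Matrix.mulVec,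
    dotProduct, Matrix.conjTranspose_apply, map_sum, Finset.mul_sum, Complex.re_sum]
  rw [Finset.sum_comm]
  refine Finset.sum_congr rfl fun j _ => Finset.sum_congr rfl fun i _ => ?_
  simp [Complex.mul_re]
  ring

theorem inner_rePsi_le (w : Fin p' → ℂ) (v : EuclideanSpace ℝ (Fin p)) :
    |⟪rePsi Ψ w, v⟫| ≤ ‖w‖ * cnorm1 (psiH Ψ v) := by
  rw [inner_rePsi, cnorm1, Finset.mul_sum]
  refine (Finset.abs_sum_le_sum_abs _ _).trans (Finset.sum_le_sum fun j _ => ?_)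
  refine (Complex.abs_re_le_norm _).trans ?_
  rw [norm_mul, Complex.norm_conj]
  exact mul_le_mul_of_nonneg_right (norm_le_pi_norm w j) (norm_nonneg _)

theorem exists_inner_rePsi_eq_cnorm1 (v : EuclideanSpace ℝ (Fin p)) :
    ∃ w : Fin p' → ℂ, ‖w‖ ≤ 1 ∧ ⟪rePsi Ψ w, v⟫ = cnorm1 (psiH Ψ v) := by
  set z := psiH Ψ v
  -- for `z j = 0` the junk value `0 / 0 = 0` is the right choice
  refine ⟨fun j => z j / (‖z j‖ : ℂ), (pi_norm_le_iff_of_nonneg zero_le_one).2 fun j => ?_, ?_⟩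
  · simpa using div_self_le_one ‖z j‖
  · rw [inner_rePsi, cnorm1]
    refine Finset.sum_congr rfl fun j _ => ?_
    rw [div_mul_eq_mul_div, Complex.mul_conj, Complex.normSq_eq_norm_sq]
    rcases eq_or_ne ‖z j‖ 0 with h | h
    · simp [h]
    · rw [Complex.ofReal_pow, pow_two, mul_div_assoc, div_self (by exact_mod_cast h), mul_one,
        Complex.ofReal_re]

end Psi

section Optimality

variable {p p' : ℕ} {C : Set (EuclideanSpace ℝ (Fin p))} {L : EuclideanSpace ℝ (Fin p) → ℝ}
  {Ψ : Matrix (Fin p) (Fin p') ℂ} {g x : EuclideanSpace ℝ (Fin p)} {u : ℝ}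

theorem mem_QSet_iff (hbar : ∃ x₀ ∈ C, psiH Ψ x₀ = 0) :
    x ∈ QSet C Ψ ↔ x ∈ C ∧ psiH Ψ x = 0 := by
  obtain ⟨x₀, hx₀C, hx₀0⟩ := hbar
  refine ⟨fun hx => ⟨hx.1, cnorm1_eq_zero.1 (le_antisymm ?_ (cnorm1_nonneg _))⟩,
    fun hx => ⟨hx.1, fun χ _ => ?_⟩⟩
  · simpa [hx₀0, cnorm1_eq_zero.2] using hx.2 x₀ hx₀C
  · simpa [hx.2, cnorm1_eq_zero.2] using cnorm1_nonneg (psiH Ψ χ)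

theorem XuSet_inter_QSet_nonempty_iff (hbar : ∃ x₀ ∈ C, psiH Ψ x₀ = 0) {xd}
    (hxd : xd ∈ XdSet C L Ψ) :
    (XuSet C L Ψ u ∩ QSet C Ψ).Nonempty ↔ xd ∈ XuSet C L Ψ u := by
  refine ⟨fun ⟨x, hxu, hxQ⟩ => ⟨hxd.1.1, fun χ hχ => ?_⟩, fun h => ⟨xd, h, hxd.1⟩⟩
  have hx0 := ((mem_QSet_iff hbar).1 hxQ).2
  have hxd0 := ((mem_QSet_iff hbar).1 hxd.1).2
  have := hxu.2 χ hχ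
  have := hxd.2 x hxQ
  simp only [hx0, hxd0, cnorm1_eq_zero.2] at *
  linarith

theorem normalCone_eq_innerDual :
    normalCone C x = ProperCone.innerDual ((x - ·) '' C) := by
  ext a
  simp only [normalCone, Set.mem_ofPred_eq, SetLike.mem_coe, ProperCone.mem_innerDual,
    Set.forall_mem_image]
  refine forall₂_congr fun y _ => ?_
  rw [← neg_sub, inner_neg_right, neg_nonpos, real_inner_comm]

theorem mem_XuSet_of_rePsi_eq (hL : ConvexOn ℝ Set.univ L) (hg : HasGradientAt L g x)
    (hx : x ∈ C) (hx0 : psiH Ψ x = 0) {t : Fin p' → ℂ} {a : EuclideanSpace ℝ (Fin p)}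
    (ha : a ∈ normalCone C x) (ht : rePsi Ψ t = g + a) (htu : ‖t‖ ≤ u) :
    x ∈ XuSet C L Ψ u := by
  refine ⟨hx, fun χ hχ => ?_⟩
  have hgrad := hL.add_inner_sub_le_of_hasGradientAt hg χ
  have hsplit : ⟪g, χ - x⟫ = ⟪rePsi Ψ t, χ - x⟫ - ⟪a, χ - x⟫ := by
    rw [ht, inner_add_left]; ring
  have hpsi : psiH Ψ (χ - x) = psiH Ψ χ := by
    rw [← psiHₗ_apply, map_sub, psiHₗ_apply, psiHₗ_apply, hx0, sub_zero]
  have hbound := (abs_le.1 (inner_rePsi_le Ψ t (χ - x))).1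
  rw [hpsi] at hbound
  have := mul_le_mul_of_nonneg_right htu (cnorm1_nonneg (psiH Ψ χ))
  have := ha χ hχ
  rw [hx0, cnorm1_eq_zero.2 rfl]
  linarith

theorem cnorm1_psiH_sub_inner_nonneg (hC : Convex ℝ C) (hg : HasGradientAt L g x)
    (hx0 : psiH Ψ x = 0) (hx : x ∈ XuSet C L Ψ u) :
    ∀ v ∈ ProperCone.innerDual (ProperCone.innerDual ((x - ·) '' C) : Set _),
      0 ≤ u * cnorm1 (psiH Ψ v) - ⟪g, v⟫ := by
  have hconv : Convex ℝ ((x - ·) '' C) := by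
    simpa [sub_eq_add_neg] using hC.affinity x (-1)
  refine nonneg_on_innerDual_innerDual hconv ⟨x, hx.1, sub_self x⟩
    (((continuous_cnorm1_psiH Ψ).const_mul u).sub (continuous_const.inner continuous_id))
    (fun c hc v => ?_) ?_
  · rw [cnorm1_psiH_smul, abs_of_pos hc, inner_smul_right]; ring
  rintro _ ⟨y, hy, rfl⟩
  show 0 ≤ u * cnorm1 (psiH Ψ (x - y)) - ⟪g, x - y⟫
  have hρ : ∀ s ∈ Set.Ioc (0 : ℝ) 1, u * cnorm1 (psiH Ψ (x + s • (y - x))) ≤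
      u * cnorm1 (psiH Ψ x) + s * (u * cnorm1 (psiH Ψ (y - x))) := fun s hs => by
    rw [← psiHₗ_apply, map_add, map_smul, psiHₗ_apply, psiHₗ_apply, hx0, zero_add,
      cnorm1_smul, abs_of_pos hs.1, cnorm1_eq_zero.2 rfl]
    linarith
  have hstep := inner_sub_add_nonneg_of_forall_le hC (ρ := fun z => u * cnorm1 (psiH Ψ z))
    hg hx.1 hy hρ hx.2
  rw [show x - y = (-1 : ℝ) • (y - x) by module, cnorm1_psiH_smul, inner_smul_right]
  simp only [abs_neg, abs_one, one_mul]
  linarith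

theorem exists_rePsi_eq_of_mem_XuSet (hC : Convex ℝ C) (hg : HasGradientAt L g x)
    (hx0 : psiH Ψ x = 0) (hu : 0 ≤ u) (hx : x ∈ XuSet C L Ψ u) :
    ∃ t : Fin p' → ℂ, ∃ a ∈ normalCone C x, rePsi Ψ t = g + a ∧ ‖t‖ ≤ u := by
  suffices ∃ w ∈ Metric.closedBall (0 : Fin p' → ℂ) 1, -g + u • rePsi Ψ w ∈ normalCone C x by
    obtain ⟨w, hw, ha⟩ := this
    refine ⟨u • w, _, ha, ?_, ?_⟩
    · rw [← rePsiₗ_apply, map_smul, rePsiₗ_apply]; abel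
    · rw [norm_smul, Real.norm_of_nonneg hu]
      exact mul_le_of_le_one_right hu (mem_closedBall_zero_iff.1 hw)
  by_contra! hdisj
  set K := (fun e => -g + u • e) '' (rePsiₗ Ψ '' Metric.closedBall 0 1)
  have hKconv : Convex ℝ K := ((convex_closedBall 0 1).linear_image _).affinity (-g) u
  have hKcomp : IsCompact K := ((isCompact_closedBall 0 1).image
    (rePsiₗ Ψ).continuous_of_finiteDimensional).image (by fun_prop)
  have hKN : Disjoint K (ProperCone.innerDual ((x - ·) '' C) : Set _) := by
    rw [← normalCone_eq_innerDual, Set.disjoint_left]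
    rintro _ ⟨_, ⟨w, hw, rfl⟩, rfl⟩
    exact hdisj w hw
  obtain ⟨f, hfN, hfK⟩ := ProperCone.hyperplane_separation _ hKconv hKcomp hKN
  set z := (InnerProductSpace.toDual ℝ _).symm f
  have hz : ∀ v, ⟪z, v⟫ = f v := fun v => InnerProductSpace.toDual_symm_apply
  have hψ := cnorm1_psiH_sub_inner_nonneg hC hg hx0 hx z fun n hn => by
    show 0 ≤ ⟪n, z⟫
    rw [real_inner_comm, hz]; exact hfN n hn
  obtain ⟨w, hw, hwz⟩ := exists_inner_rePsi_eq_cnorm1 Ψ z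
  have hfk := hfK (-g + u • rePsi Ψ w) ⟨_, ⟨w, mem_closedBall_zero_iff.2 hw, rfl⟩, rfl⟩
  rw [← hz, inner_add_right, inner_neg_right, inner_smul_right, real_inner_comm g,
    real_inner_comm (rePsi Ψ w), hwz] at hfk
  linarith

theorem mem_XuSet_iff (hC : Convex ℝ C) (hL : ConvexOn ℝ Set.univ L) (hg : HasGradientAt L g x)
    (hx : x ∈ C) (hx0 : psiH Ψ x = 0) (hu : 0 ≤ u) :
    x ∈ XuSet C L Ψ u ↔ ∃ t : Fin p' → ℂ, ∃ a ∈ normalCone C x, rePsi Ψ t = g + a ∧ ‖t‖ ≤ u :=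
  ⟨exists_rePsi_eq_of_mem_XuSet hC hg hx0 hu,
    fun ⟨_, _, ha, ht, htu⟩ => mem_XuSet_of_rePsi_eq hL hg hx hx0 ha ht htu⟩

end Optimality

theorem Matrix.isUnit_det_of_rank_eq_card {K n : Type*} [Field K] [Fintype n] [DecidableEq n]
    (M : Matrix n n K) (h : M.rank = Fintype.card n) : IsUnit M.det := by
  rw [← Matrix.isUnit_iff_isUnit_det, ← Matrix.mulVec_surjective_iff_isUnit]
  have htop : LinearMap.range M.mulVecLin = ⊤ :=
    Submodule.eq_top_of_finrank_eq (h.trans (Module.finrank_fintype_fun_eq_card K).symm)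
  exact fun v => LinearMap.range_eq_top.1 htop v

theorem Matrix.re_mul_conjTranspose {m n : Type*} [Fintype n] (Z : Matrix m n ℂ) :
    (Z * Zᴴ).map Complex.re =
      fromCols (Z.map Complex.re) (Z.map Complex.im) *
        (fromCols (Z.map Complex.re) (Z.map Complex.im))ᵀ := by
  rw [transpose_fromCols, fromCols_mul_fromRows]
  ext i k
  simp only [Matrix.map_apply, Matrix.mul_apply, Complex.re_sum, Matrix.add_apply,
    ← Finset.sum_add_distrib, Matrix.conjTranspose_apply, Matrix.transpose_apply,
    Complex.mul_re, RCLike.star_def, Complex.conj_re, Complex.conj_im]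
  exact Finset.sum_congr rfl fun j _ => by ring

theorem Matrix.re_ofReal_mulVec {m n : Type*} [Fintype n] (F : Matrix m n ℝ) (y : n → ℂ) (i : m) :
    ((F.map Complex.ofReal *ᵥ y) i).re = (F *ᵥ fun j => (y j).re) i := by
  simp only [Matrix.mulVec, dotProduct, Complex.re_sum, Matrix.map_apply, Complex.re_ofReal_mul]

theorem Matrix.re_mulVec_ofReal {m n : Type*} [Fintype n] (A : Matrix m n ℂ) (v : n → ℝ) (i : m) :
    ((A *ᵥ fun j => (v j : ℂ)) i).re = (A.map Complex.re *ᵥ v) i := by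
  simp only [Matrix.mulVec, dotProduct, Complex.re_sum, Matrix.map_apply, Complex.mul_re,
    Complex.ofReal_re, Complex.ofReal_im, mul_zero, sub_zero]

section Factorization

variable {p p' d : ℕ} {F : Matrix (Fin p) (Fin d) ℝ} {Z : Matrix (Fin d) (Fin p') ℂ}

theorem isUnit_det_re_mul_conjTranspose
    (hZ : (fromCols (Z.map Complex.re) (Z.map Complex.im)).rank = d) :
    IsUnit ((Z * Zᴴ).map Complex.re).det :=
  Matrix.isUnit_det_of_rank_eq_card _ <| by
    rw [Matrix.re_mul_conjTranspose, Matrix.rank_self_mul_transpose, hZ, Fintype.card_fin]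

theorem Fpinv_mulVec_mulVec (hF : F.rank = d) (c : Fin d → ℝ) : Fpinv F *ᵥ (F *ᵥ c) = c := by
  have hFF : IsUnit (Fᵀ * F).det := Matrix.isUnit_det_of_rank_eq_card _ <| by
    rw [Matrix.rank_transpose_mul_self, hF, Fintype.card_fin]
  rw [Matrix.mulVec_mulVec, Fpinv, Matrix.mul_assoc, Matrix.nonsing_inv_mul _ hFF,
    Matrix.one_mulVec]

theorem re_mulVec_Zddag_mulVec (hM : IsUnit ((Z * Zᴴ).map Complex.re).det) (r : Fin d → ℝ)
    (i : Fin d) : ((Z *ᵥ (Zddag Z *ᵥ fun k => (r k : ℂ))) i).re = r i := by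
  set M := (Z * Zᴴ).map Complex.re
  have hreal : (M⁻¹.map Complex.ofReal *ᵥ fun k => (r k : ℂ)) = fun k => ((M⁻¹ *ᵥ r) k : ℂ) :=
    funext fun k => (RingHom.map_mulVec Complex.ofRealHom M⁻¹ r k).symm
  rw [Zddag, ← Matrix.mulVec_mulVec, hreal, Matrix.mulVec_mulVec, Matrix.re_mulVec_ofReal,
    Matrix.mulVec_mulVec, Matrix.mul_nonsing_inv _ hM, Matrix.one_mulVec]

theorem rePsi_ofReal_mul (t : Fin p' → ℂ) :
    rePsi (F.map Complex.ofReal * Z) t = WithLp.toLp 2 (F *ᵥ fun k => ((Z *ᵥ t) k).re) := by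
  ext i
  simp only [rePsi, ← Matrix.mulVec_mulVec, Matrix.re_ofReal_mulVec]

variable {g a : EuclideanSpace ℝ (Fin p)} {t : Fin p' → ℂ}

theorem rePsi_ofReal_mul_eq_iff :
    rePsi (F.map Complex.ofReal * Z) t = g + a ↔
      (F *ᵥ fun k => ((Z *ᵥ t) k).re) = fun i => g i + a i := by
  rw [rePsi_ofReal_mul]
  exact ⟨congrArg WithLp.ofLp, congrArg (WithLp.toLp 2)⟩

theorem pvec_eq_self (hF : F.rank = d) (h : rePsi (F.map Complex.ofReal * Z) t = g + a) :
    pvec F Z g a t = t := by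
  rw [pvec, ← rePsi_ofReal_mul_eq_iff.1 h, Fpinv_mulVec_mulVec hF]
  simp only [sub_self, Complex.ofReal_zero]
  exact (add_eq_left).2 (Matrix.mulVec_zero (Zddag Z))

theorem rePsi_pvec (hF : F.rank = d) (hM : IsUnit ((Z * Zᴴ).map Complex.re).det)
    {c : Fin d → ℝ} (hc : F *ᵥ c = fun i => g i + a i) :
    rePsi (F.map Complex.ofReal * Z) (pvec F Z g a t) = g + a := by
  have hre : (fun k => ((Z *ᵥ pvec F Z g a t) k).re) = c := by
    ext k
    rw [pvec, Matrix.mulVec_add, Pi.add_apply, Complex.add_re, re_mulVec_Zddag_mulVec hM, ← hc,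
      Fpinv_mulVec_mulVec hF]
    ring
  rw [rePsi_ofReal_mul_eq_iff, hre, hc]

theorem setOf_cnormInf_pvec_eq (hF : F.rank = d) (hM : IsUnit ((Z * Zᴴ).map Complex.re).det)
    (S : Set (EuclideanSpace ℝ (Fin p))) :
    {r : ℝ | ∃ t : Fin p' → ℂ, ∃ a ∈ S, (∃ c : Fin d → ℝ, F *ᵥ c = fun i => g i + a i) ∧
        r = cnormInf (pvec F Z g a t)} =
      {r : ℝ | ∃ t : Fin p' → ℂ, ∃ a ∈ S,
        rePsi (F.map Complex.ofReal * Z) t = g + a ∧ r = ‖t‖} := by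
  ext r
  simp only [Set.mem_ofPred_eq, cnormInf_eq_norm]
  constructor
  · rintro ⟨t, a, ha, ⟨c, hc⟩, rfl⟩
    exact ⟨_, a, ha, rePsi_pvec hF hM hc, rfl⟩
  · rintro ⟨t, a, ha, ht, rfl⟩
    exact ⟨t, a, ha, ⟨_, rePsi_ofReal_mul_eq_iff.1 ht⟩, by rw [pvec_eq_self hF ht]⟩

end Factorization

theorem ENNReal.sInf_ofReal_image_upwardClosure {S : Set ℝ} (hS : ∀ r ∈ S, 0 ≤ r) :
    sInf (ENNReal.ofReal '' S) = sInf (ENNReal.ofReal '' {u | 0 ≤ u ∧ ∃ r ∈ S, r ≤ u}) := by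
  refine le_antisymm (le_sInf ?_)
    (sInf_le_sInf (Set.image_mono fun r hr => ⟨hS r hr, r, hr, le_rfl⟩))
  rintro _ ⟨u, ⟨-, r, hr, hru⟩, rfl⟩
  exact (sInf_le (Set.mem_image_of_mem _ hr)).trans (ENNReal.ofReal_le_ofReal hru)

theorem statement_11_general {p p' d : ℕ}
    (C : Set (EuclideanSpace ℝ (Fin p)))
    (hCcv : Convex ℝ C)
    (L : EuclideanSpace ℝ (Fin p) → ℝ) (hLcv : ConvexOn ℝ Set.univ L)
    (gradL : EuclideanSpace ℝ (Fin p) → EuclideanSpace ℝ (Fin p))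
    (hLd : ∀ x, HasGradientAt L (gradL x) x)
    (Ψ : Matrix (Fin p) (Fin p') ℂ)
    (hbar : ∃ x ∈ C, psiH Ψ x = 0)
    (F : Matrix (Fin p) (Fin d) ℝ) (Z : Matrix (Fin d) (Fin p') ℂ)
    (hfac : Ψ = F.map Complex.ofReal * Z)
    (hF : F.rank = d)
    (hZ : (Matrix.fromCols (Z.map Complex.re) (Z.map Complex.im)).rank = d) :
    IsUnit ((Z * Zᴴ).map Complex.re).det ∧
    ∀ xd ∈ XdSet C L Ψ,
      sInf (ENNReal.ofReal '' {r : ℝ | ∃ t : Fin p' → ℂ, ∃ a ∈ normalCone C xd,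
          (∃ c : Fin d → ℝ, F.mulVec c = fun i => gradL xd i + a i) ∧
          r = cnormInf (pvec F Z (gradL xd) a t)})
        = Ubound C L Ψ := by
  have hM := isUnit_det_re_mul_conjTranspose hZ
  refine ⟨hM, fun xd hxd => ?_⟩
  obtain ⟨hxdC, hxd0⟩ := (mem_QSet_iff hbar).1 hxd.1
  rw [setOf_cnormInf_pvec_eq hF hM, ← hfac, Ubound,
    ENNReal.sInf_ofReal_image_upwardClosure (by rintro _ ⟨t, -, -, -, rfl⟩; exact norm_nonneg t)]
  congr with u
  refine and_congr_right fun hu => ?_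
  rw [XuSet_inter_QSet_nonempty_iff hbar hxd, mem_XuSet_iff hCcv hLcv (hLd xd) hxdC hxd0 hu]
  constructor
  · rintro ⟨_, ⟨t, a, ha, ht, rfl⟩, htu⟩
    exact ⟨t, a, ha, ht, htu⟩
  · rintro ⟨t, a, ha, ht, htu⟩
    exact ⟨‖t‖, ⟨t, a, ha, ht, rfl⟩, htu⟩

theorem statement_11 {p p' d : ℕ} (hp : 0 < p) (hp' : 0 < p') (hd : 0 < d)
    (C : Set (EuclideanSpace ℝ (Fin p))) (hCne : C.Nonempty) (hCcl : IsClosed C)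
    (hCcv : Convex ℝ C)
    (L : EuclideanSpace ℝ (Fin p) → ℝ) (hLcv : ConvexOn ℝ Set.univ L)
    (gradL : EuclideanSpace ℝ (Fin p) → EuclideanSpace ℝ (Fin p))
    (hLd : ∀ x, HasGradientAt L (gradL x) x)
    (hLb : BddBelow (L '' C))
    (Ψ : Matrix (Fin p) (Fin p') ℂ) (hXd : (XdSet C L Ψ).Nonempty)
    (hbar : ∃ x ∈ C, psiH Ψ x = 0)
    (hdim : Module.finrank ℝ
      (Submodule.span ℝ {v : EuclideanSpace ℝ (Fin p) | ∃ w : Fin p' → ℂ, rePsi Ψ w = v}) = d)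
    (F : Matrix (Fin p) (Fin d) ℝ) (Z : Matrix (Fin d) (Fin p') ℂ)
    (hfac : Ψ = F.map Complex.ofReal * Z)
    (hF : F.rank = d)
    (hZ : (Matrix.fromCols (Z.map Complex.re) (Z.map Complex.im)).rank = d) :
    IsUnit ((Z * Zᴴ).map Complex.re).det ∧
    ∀ xd ∈ XdSet C L Ψ,
      sInf (ENNReal.ofReal '' {r : ℝ | ∃ t : Fin p' → ℂ, ∃ a ∈ normalCone C xd,
          (∃ c : Fin d → ℝ, F.mulVec c = fun i => gradL xd i + a i) ∧
          r = cnormInf (pvec F Z (gradL xd) a t)})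
        = Ubound C L Ψ :=
  statement_11_general C hCcv L hLcv gradL hLd Ψ hbar F Z hfac hF hZ
end
end

section
/- (Example: nonnegative signal, real invertible dictionary) Let Ψ be a real invertible p × p matrix and C = ℝ₊^p = {x ∈ ℝ^p : x ⪰ 0}. Then X⋄ = Q = {0} and U = inf { ‖Ψ⁻¹(∇L(0) + a)‖_∞ : a ∈ ℝ^p, a ⪯ 0 }. In particular, if ∇L(0) ⪰ 0 (all coordinates nonnegative), then U = 0, i.e., signal sparsity regularization is irrelevant; and if Ψ = I, then U = −min(0, min_i [∇L(0)]_i). -/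
/-
Since Ψ is invertible, ‖Ψᵀx‖₁ vanishes only at x = 0, so Q = X⋄ = {0} and U is the infimum of
the u ≥ 0 for which 0 minimises L + u‖Ψᵀ·‖₁ over the orthant. For convex L this is the first-order
condition ⟨∇L(0), χ⟩ + u‖Ψᵀχ‖₁ ≥ 0 for all χ ⪰ 0. By Hahn–Banach, separating the compact convex set
{∇L(0) + Ψw : ‖w‖∞ ≤ u} from the orthant, that condition holds iff ∇L(0) + Ψw ⪰ 0 for some
‖w‖∞ ≤ u, i.e. iff ‖Ψ⁻¹(∇L(0) + a)‖∞ ≤ u for some a ⪯ 0 (take a = -(∇L(0) + Ψw)).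
-/

open Matrix
open scoped RealInnerProductSpace ENNReal

noncomputable section

def rnorm1 {n : ℕ} (z : Fin n → ℝ) : ℝ := ∑ j, |z j|

noncomputable def rnormInf {n : ℕ} (z : Fin n → ℝ) : ℝ := ⨆ j, |z j|

/-- `Ψᵀ x` for a real dictionary `Ψ`. -/
def psiT {p q : ℕ} (Ψ : Matrix (Fin p) (Fin q) ℝ) (x : EuclideanSpace ℝ (Fin p)) :
    Fin q → ℝ :=
  Matrix.mulVec Ψᵀ fun i => x i

def XuSetR {p q : ℕ} (C : Set (EuclideanSpace ℝ (Fin p))) (L : EuclideanSpace ℝ (Fin p) → ℝ)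
    (Ψ : Matrix (Fin p) (Fin q) ℝ) (u : ℝ) : Set (EuclideanSpace ℝ (Fin p)) :=
  {x ∈ C | ∀ χ ∈ C, L x + u * rnorm1 (psiT Ψ x) ≤ L χ + u * rnorm1 (psiT Ψ χ)}

def QSetR {p q : ℕ} (C : Set (EuclideanSpace ℝ (Fin p))) (Ψ : Matrix (Fin p) (Fin q) ℝ) :
    Set (EuclideanSpace ℝ (Fin p)) :=
  {x ∈ C | ∀ χ ∈ C, rnorm1 (psiT Ψ x) ≤ rnorm1 (psiT Ψ χ)}

def XdSetR {p q : ℕ} (C : Set (EuclideanSpace ℝ (Fin p))) (L : EuclideanSpace ℝ (Fin p) → ℝ)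
    (Ψ : Matrix (Fin p) (Fin q) ℝ) : Set (EuclideanSpace ℝ (Fin p)) :=
  {x ∈ QSetR C Ψ | ∀ χ ∈ QSetR C Ψ, L x ≤ L χ}

def UboundR {p q : ℕ} (C : Set (EuclideanSpace ℝ (Fin p))) (L : EuclideanSpace ℝ (Fin p) → ℝ)
    (Ψ : Matrix (Fin p) (Fin q) ℝ) : ℝ≥0∞ :=
  sInf (ENNReal.ofReal '' {u : ℝ | 0 ≤ u ∧ (XuSetR C L Ψ u ∩ QSetR C Ψ).Nonempty})

open Filter Set

lemma rnorm1_nonneg {n : ℕ} (z : Fin n → ℝ) : 0 ≤ rnorm1 z :=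
  Finset.sum_nonneg fun _ _ => abs_nonneg _

@[simp]
lemma rnorm1_eq_zero_iff {n : ℕ} {z : Fin n → ℝ} : rnorm1 z = 0 ↔ z = 0 := by
  simp [rnorm1, Finset.sum_eq_zero_iff_of_nonneg, funext_iff]

@[simp]
lemma rnorm1_zero {n : ℕ} : rnorm1 (0 : Fin n → ℝ) = 0 :=
  rnorm1_eq_zero_iff.mpr rfl

lemma rnorm1_smul {n : ℕ} (t : ℝ) (z : Fin n → ℝ) : rnorm1 (t • z) = |t| * rnorm1 z := by
  simp only [rnorm1, Pi.smul_apply, smul_eq_mul, abs_mul, Finset.mul_sum]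

lemma rnormInf_nonneg {n : ℕ} (z : Fin n → ℝ) : 0 ≤ rnormInf z :=
  Real.iSup_nonneg fun _ => abs_nonneg _

lemma abs_le_rnormInf {n : ℕ} (z : Fin n → ℝ) (j : Fin n) : |z j| ≤ rnormInf z :=
  le_ciSup (f := fun j => |z j|) (Finite.bddAbove (finite_range _)) j

lemma rnormInf_le_iff {n : ℕ} {z : Fin n → ℝ} {u : ℝ} (hu : 0 ≤ u) :
    rnormInf z ≤ u ↔ ∀ j, |z j| ≤ u :=
  ⟨fun h j => (abs_le_rnormInf z j).trans h, fun h => Real.iSup_le h hu⟩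

@[simp]
lemma rnormInf_zero {n : ℕ} : rnormInf (0 : Fin n → ℝ) = 0 := by
  simp [rnormInf]

lemma psiT_eq {p q : ℕ} (Ψ : Matrix (Fin p) (Fin q) ℝ) (x : EuclideanSpace ℝ (Fin p)) :
    psiT Ψ x = Ψᵀ *ᵥ x.ofLp :=
  rfl

@[simp]
lemma psiT_zero {p q : ℕ} (Ψ : Matrix (Fin p) (Fin q) ℝ) : psiT Ψ 0 = 0 := by
  simp [psiT_eq]

lemma psiT_smul {p q : ℕ} (Ψ : Matrix (Fin p) (Fin q) ℝ) (t : ℝ) (x : EuclideanSpace ℝ (Fin p)) :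
    psiT Ψ (t • x) = t • psiT Ψ x := by
  simp [psiT_eq, mulVec_smul]

lemma psiT_eq_zero_iff {p : ℕ} {Ψ : Matrix (Fin p) (Fin p) ℝ} (hΨ : IsUnit Ψ.det)
    {x : EuclideanSpace ℝ (Fin p)} : psiT Ψ x = 0 ↔ x = 0 := by
  have hinj : Function.Injective Ψᵀ.mulVec := mulVec_injective_iff_isUnit.mpr <|
    (isUnit_iff_isUnit_det _).mpr (by rwa [det_transpose])
  rw [psiT_eq, ← mulVec_zero Ψᵀ, hinj.eq_iff, ← WithLp.ofLp_zero 2,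
    (WithLp.ofLp_injective 2).eq_iff]

section FirstOrder

variable {E : Type*} [NormedAddCommGroup E] [InnerProductSpace ℝ E] [CompleteSpace E]
  {L : E → ℝ} {g : E}

lemma HasGradientAt.hasDerivAt_smul_zero (hL : HasGradientAt L g 0) (χ : E) :
    HasDerivAt (fun t : ℝ => L (t • χ)) ⟪g, χ⟫ 0 := by
  simpa [HasLineDerivAt] using hL.hasFDerivAt.hasLineDerivAt χ

lemma ConvexOn.inner_le_sub_of_hasGradientAt_zero (hLc : ConvexOn ℝ univ L)
    (hL : HasGradientAt L g 0) (χ : E) : ⟪g, χ⟫ ≤ L χ - L 0 := by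
  have hray : ConvexOn ℝ univ fun t : ℝ => L (t • χ) :=
    hLc.comp_linearMap (LinearMap.toSpanSingleton ℝ E χ)
  simpa [slope_def_field] using
    hray.le_slope_of_hasDerivAt (mem_univ 0) (mem_univ 1) one_pos (hL.hasDerivAt_smul_zero χ)

theorem forall_le_add_iff_inner_add_nonneg {C : Set E} {R : E → ℝ} (hC : StarConvex ℝ 0 C)
    (hLc : ConvexOn ℝ univ L) (hL : HasGradientAt L g 0)
    (hR : ∀ t : ℝ, 0 < t → ∀ x, R (t • x) = t * R x) :
    (∀ χ ∈ C, L 0 ≤ L χ + R χ) ↔ ∀ χ ∈ C, 0 ≤ ⟪g, χ⟫ + R χ := by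
  refine ⟨fun h χ hχ => ?_, fun h χ hχ => ?_⟩
  · have hslope : ∀ t ∈ Ioo (0 : ℝ) 1, -R χ ≤ t⁻¹ * (L (t • χ) - L 0) := by
      rintro t ⟨ht0, ht1⟩
      have htχ : t • χ ∈ C := by
        simpa using hC hχ (sub_nonneg.mpr ht1.le) ht0.le (sub_add_cancel 1 t)
      have hmin := h _ htχ
      rw [hR t ht0] at hmin
      rw [le_inv_mul_iff₀ ht0]
      linarith
    have hlim := (hL.hasDerivAt_smul_zero χ).tendsto_slope_zero_right
    simp only [zero_add, zero_smul, smul_eq_mul] at hlim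
    linarith [ge_of_tendsto hlim (eventually_of_mem (Ioo_mem_nhdsGT one_pos) hslope)]
  · linarith [h χ hχ, hLc.inner_le_sub_of_hasGradientAt_zero hL χ]

end FirstOrder

section Duality

lemma exists_nonneg_dotProduct_eq_of_lt {ι : Type*} [Fintype ι] [DecidableEq ι]
    (f : StrongDual ℝ (ι → ℝ)) {β : ℝ} (hf : ∀ c, 0 ≤ c → β < f c) :
    ∃ χ : ι → ℝ, 0 ≤ χ ∧ ∀ x, f x = χ ⬝ᵥ x := by
  refine ⟨(dotProductEquiv ℝ ι).symm f.toLinearMap, fun i => ?_, fun x => ?_⟩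
  · by_contra! hneg
    have hβ : β < 0 := by simpa using hf 0 le_rfl
    have hfi : f (Pi.single i 1) < 0 := by simpa using hneg
    -- rescaling `Pi.single i 1` by `β / f (Pi.single i 1) > 0` makes `f` take the value `β`
    have hscaled := hf ((β / f (Pi.single i 1)) • Pi.single i 1)
      (smul_nonneg (div_nonneg_of_nonpos hβ.le hfi.le) (Pi.single_nonneg.mpr zero_le_one))
    rw [map_smul, smul_eq_mul, div_mul_cancel₀ _ hfi.ne] at hscaled
    exact lt_irrefl _ hscaled
  · exact (LinearMap.congr_fun ((dotProductEquiv ℝ ι).apply_symm_apply f.toLinearMap) x).symm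

lemma exists_abs_le_dotProduct_eq {q : ℕ} (v : Fin q → ℝ) {u : ℝ} (hu : 0 ≤ u) :
    ∃ w : Fin q → ℝ, (∀ j, |w j| ≤ u) ∧ w ⬝ᵥ v = u * rnorm1 v := by
  refine ⟨fun j => u * SignType.sign (v j), fun j => ?_, ?_⟩
  · rw [abs_mul, abs_of_nonneg hu]
    exact mul_le_of_le_one_right hu (by rcases SignType.sign (v j) with _ | _ | _ <;> simp)
  · simp only [dotProduct, rnorm1, Finset.mul_sum, mul_assoc, sign_mul_self]

lemma dotProduct_le_mul_rnorm1 {q : ℕ} {w : Fin q → ℝ} {u : ℝ} (hw : ∀ j, |w j| ≤ u)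
    (v : Fin q → ℝ) : w ⬝ᵥ v ≤ u * rnorm1 v := by
  rw [rnorm1, Finset.mul_sum]
  refine Finset.sum_le_sum fun j _ => ?_
  calc w j * v j ≤ |w j| * |v j| := abs_mul (w j) (v j) ▸ le_abs_self _
    _ ≤ u * |v j| := mul_le_mul_of_nonneg_right (hw j) (abs_nonneg _)

theorem exists_abs_le_nonneg_add_mulVec_iff {p q : ℕ} (A : Matrix (Fin p) (Fin q) ℝ)
    (g : Fin p → ℝ) {u : ℝ} (hu : 0 ≤ u) :
    (∃ w : Fin q → ℝ, (∀ j, |w j| ≤ u) ∧ 0 ≤ g + A *ᵥ w) ↔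
      ∀ χ : Fin p → ℝ, 0 ≤ χ → 0 ≤ g ⬝ᵥ χ + u * rnorm1 (Aᵀ *ᵥ χ) := by
  have hpair : ∀ w χ, (g + A *ᵥ w) ⬝ᵥ χ = g ⬝ᵥ χ + w ⬝ᵥ Aᵀ *ᵥ χ := fun w χ => by
    rw [add_dotProduct, dotProduct_comm (A *ᵥ w), dotProduct_mulVec, mulVec_transpose,
      dotProduct_comm w]
  constructor
  · rintro ⟨w, hw, hpos⟩ χ hχ
    have hprod := dotProduct_nonneg_of_nonneg hpos hχ
    rw [hpair] at hprod
    linarith [dotProduct_le_mul_rnorm1 hw (Aᵀ *ᵥ χ)]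
  intro h
  set B : Set (Fin q → ℝ) := Metric.closedBall 0 u
  have hB : ∀ w, w ∈ B ↔ ∀ j, |w j| ≤ u := fun w => by
    simp only [B, mem_closedBall_zero_iff, pi_norm_le_iff_of_nonneg hu, Real.norm_eq_abs]
  by_contra! hnone
  have hdisj : Disjoint ((g + ·) '' (A.mulVecLin '' B)) (Ici 0) := by
    rw [Set.disjoint_left]
    rintro _ ⟨_, ⟨w, hw, rfl⟩, rfl⟩ hpos
    exact hnone w ((hB w).mp hw) hpos
  obtain ⟨f, α, β, hfS, hαβ, hfC⟩ := geometric_hahn_banach_compact_closed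
    (((convex_closedBall 0 u).linear_image _).translate g)
    (((isCompact_closedBall 0 u).image A.mulVecLin.continuous_of_finiteDimensional).image
      (continuous_const_add g))
    (convex_Ici 0) isClosed_Ici hdisj
  obtain ⟨χ, hχ, hfχ⟩ := exists_nonneg_dotProduct_eq_of_lt f hfC
  obtain ⟨w, hw, hwχ⟩ := exists_abs_le_dotProduct_eq (Aᵀ *ᵥ χ) hu
  have hS := hfS (g + A *ᵥ w) (mem_image_of_mem _ (mem_image_of_mem _ ((hB w).mpr hw)))
  rw [hfχ, dotProduct_comm, hpair, hwχ] at hS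
  linarith [h χ hχ, hfC 0 self_mem_Ici, map_zero f]

lemma exists_abs_le_nonneg_add_mulVec_iff_of_isUnit {p : ℕ} {Ψ : Matrix (Fin p) (Fin p) ℝ}
    (hΨ : IsUnit Ψ.det) (g : Fin p → ℝ) {u : ℝ} (hu : 0 ≤ u) :
    (∃ w : Fin p → ℝ, (∀ j, |w j| ≤ u) ∧ 0 ≤ g + Ψ *ᵥ w) ↔
      ∃ a : Fin p → ℝ, a ≤ 0 ∧ rnormInf (Ψ⁻¹ *ᵥ (g + a)) ≤ u := by
  simp_rw [rnormInf_le_iff hu]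
  constructor
  · rintro ⟨w, hw, hpos⟩
    refine ⟨-(g + Ψ *ᵥ w), neg_nonpos.mpr hpos, fun j => ?_⟩
    simpa [mulVec_neg, mulVec_mulVec, nonsing_inv_mul _ hΨ] using hw j
  · rintro ⟨a, ha, hw⟩
    refine ⟨-(Ψ⁻¹ *ᵥ (g + a)), fun j => by simpa using hw j, ?_⟩
    simpa [mulVec_neg, mulVec_mulVec, mul_nonsing_inv _ hΨ] using ha

end Duality

section ProblemSets

variable {p q : ℕ} {C : Set (EuclideanSpace ℝ (Fin p))} {L : EuclideanSpace ℝ (Fin p) → ℝ}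
  {Ψ : Matrix (Fin p) (Fin q) ℝ}

lemma QSetR_eq_singleton_zero (h0 : 0 ∈ C) (hΨ : ∀ x, psiT Ψ x = 0 → x = 0) :
    QSetR C Ψ = {0} := by
  ext x
  refine ⟨fun ⟨_, hmin⟩ => hΨ x ?_, fun hx => ?_⟩
  · exact rnorm1_eq_zero_iff.mp (le_antisymm (by simpa using hmin 0 h0) (rnorm1_nonneg _))
  · rw [mem_singleton_iff.mp hx]
    exact ⟨h0, fun χ _ => by simpa using rnorm1_nonneg _⟩

lemma XdSetR_eq_of_QSetR_eq_singleton {x₀ : EuclideanSpace ℝ (Fin p)} (h : QSetR C Ψ = {x₀}) :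
    XdSetR C L Ψ = {x₀} := by
  ext x
  simp only [XdSetR, h, mem_singleton_iff, forall_eq, mem_ofPred_eq, and_iff_left_iff_imp]
  rintro rfl
  exact le_rfl

lemma UboundR_eq_of_QSetR_eq_singleton {x₀ : EuclideanSpace ℝ (Fin p)} (h : QSetR C Ψ = {x₀}) :
    UboundR C L Ψ = sInf (ENNReal.ofReal '' {u | 0 ≤ u ∧ x₀ ∈ XuSetR C L Ψ u}) := by
  simp only [UboundR, h, inter_singleton_nonempty]

lemma zero_mem_XuSetR_iff {g : EuclideanSpace ℝ (Fin p)} (h0 : 0 ∈ C) (hC : StarConvex ℝ 0 C)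
    (hLc : ConvexOn ℝ univ L) (hL : HasGradientAt L g 0) (u : ℝ) :
    0 ∈ XuSetR C L Ψ u ↔ ∀ χ ∈ C, 0 ≤ ⟪g, χ⟫ + u * rnorm1 (psiT Ψ χ) := by
  simp only [XuSetR, mem_ofPred_eq, h0, true_and, psiT_zero, rnorm1_zero, mul_zero, add_zero]
  refine forall_le_add_iff_inner_add_nonneg hC hLc hL fun t ht x => ?_
  rw [psiT_smul, rnorm1_smul, abs_of_pos ht]
  ring

end ProblemSets

section Orthant

variable {p : ℕ}

lemma zero_mem_orthant :
    (0 : EuclideanSpace ℝ (Fin p)) ∈ {x : EuclideanSpace ℝ (Fin p) | ∀ i, 0 ≤ x i} :=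
  fun _ => le_rfl

lemma starConvex_orthant : StarConvex ℝ 0 {x : EuclideanSpace ℝ (Fin p) | ∀ i, 0 ≤ x i} :=
  fun _ hy _ b _ hb _ i => by simpa using mul_nonneg hb (hy i)

lemma inner_eq_ofLp_dotProduct (g χ : EuclideanSpace ℝ (Fin p)) : ⟪g, χ⟫ = g.ofLp ⬝ᵥ χ.ofLp := by
  simp [EuclideanSpace.inner_eq_star_dotProduct, dotProduct_comm]

theorem zero_mem_XuSetR_orthant_iff {Ψ : Matrix (Fin p) (Fin p) ℝ} (hΨ : IsUnit Ψ.det)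
    {L : EuclideanSpace ℝ (Fin p) → ℝ} {g : EuclideanSpace ℝ (Fin p)} (hLc : ConvexOn ℝ univ L)
    (hL : HasGradientAt L g 0) {u : ℝ} (hu : 0 ≤ u) :
    0 ∈ XuSetR {x : EuclideanSpace ℝ (Fin p) | ∀ i, 0 ≤ x i} L Ψ u ↔
      ∃ a : EuclideanSpace ℝ (Fin p), (∀ i, a i ≤ 0) ∧
        rnormInf (Ψ⁻¹ *ᵥ fun i => g i + a i) ≤ u := by
  rw [zero_mem_XuSetR_iff zero_mem_orthant starConvex_orthant hLc hL]
  have horthant : (∀ χ ∈ {x : EuclideanSpace ℝ (Fin p) | ∀ i, 0 ≤ x i},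
      0 ≤ ⟪g, χ⟫ + u * rnorm1 (psiT Ψ χ)) ↔
      ∀ χ : Fin p → ℝ, 0 ≤ χ → 0 ≤ g.ofLp ⬝ᵥ χ + u * rnorm1 (Ψᵀ *ᵥ χ) :=
    ⟨fun h χ hχ => by simpa [inner_eq_ofLp_dotProduct, psiT_eq] using h (WithLp.toLp 2 χ) hχ,
      fun h χ hχ => by simpa [inner_eq_ofLp_dotProduct, psiT_eq] using h χ.ofLp hχ⟩
  rw [horthant, ← exists_abs_le_nonneg_add_mulVec_iff Ψ g.ofLp hu,
    exists_abs_le_nonneg_add_mulVec_iff_of_isUnit hΨ _ hu]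
  exact ⟨fun ⟨a, ha, h⟩ => ⟨WithLp.toLp 2 a, ha, h⟩, fun ⟨a, ha, h⟩ => ⟨a.ofLp, ha, h⟩⟩

lemma isLeast_rnormInf_add_nonpos (g : EuclideanSpace ℝ (Fin p)) :
    IsLeast {r | ∃ a : EuclideanSpace ℝ (Fin p), (∀ i, a i ≤ 0) ∧ r = rnormInf fun i => g i + a i}
      (-min 0 (⨅ i, g i)) := by
  have hlower : ∀ a : EuclideanSpace ℝ (Fin p), (∀ i, a i ≤ 0) →
      -min 0 (⨅ i, g i) ≤ rnormInf fun i => g i + a i := by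
    intro a ha
    have hle : ∀ i, -rnormInf (fun i => g i + a i) ≤ g i := fun i => by
      linarith [neg_abs_le (g i + a i), ha i, abs_le_rnormInf (fun i => g i + a i) i]
    rw [neg_le, le_min_iff]
    exact ⟨neg_nonpos.mpr (rnormInf_nonneg _),
      Real.le_iInf hle (neg_nonpos.mpr (rnormInf_nonneg _))⟩
  -- the optimal `a` cancels the positive part of `g`, leaving `min (g i) 0`
  set a : EuclideanSpace ℝ (Fin p) := WithLp.toLp 2 fun i => -max (g i) 0
  have ha : ∀ i, a i ≤ 0 := fun i => neg_nonpos.mpr (le_max_right _ _)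
  refine ⟨⟨a, ha, le_antisymm (hlower a ha) ?_⟩, fun r ⟨b, hb, hr⟩ => hr ▸ hlower b hb⟩
  refine Real.iSup_le (fun i => ?_) (neg_nonneg.mpr (min_le_left _ _))
  have hgi : ⨅ i, g i ≤ g i := ciInf_le (Finite.bddBelow (finite_range _)) i
  rcases le_total (g i) 0 with h | h
  · simp [a, max_eq_right h, abs_of_nonpos h, hgi]
  · simp [a, max_eq_left h]

end Orthant

lemma sInf_ofReal_image_eq_of_forall_exists_le {S T : Set ℝ} (hTS : T ⊆ S)
    (hST : ∀ u ∈ S, ∃ r ∈ T, r ≤ u) :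
    sInf (ENNReal.ofReal '' S) = sInf (ENNReal.ofReal '' T) := by
  refine le_antisymm (sInf_le_sInf (image_mono hTS)) (le_sInf ?_)
  rintro _ ⟨u, hu, rfl⟩
  obtain ⟨r, hr, hru⟩ := hST u hu
  exact (sInf_le (mem_image_of_mem _ hr)).trans (ENNReal.ofReal_le_ofReal hru)

theorem statement_14_general {p : ℕ}
    (Ψ : Matrix (Fin p) (Fin p) ℝ) (hΨ : IsUnit Ψ.det)
    (L : EuclideanSpace ℝ (Fin p) → ℝ) (hLcv : ConvexOn ℝ Set.univ L)
    (gradL : EuclideanSpace ℝ (Fin p) → EuclideanSpace ℝ (Fin p))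
    (hLd : ∀ x, HasGradientAt L (gradL x) x) :
    QSetR {x : EuclideanSpace ℝ (Fin p) | ∀ i, 0 ≤ x i} Ψ = {0} ∧
    XdSetR {x : EuclideanSpace ℝ (Fin p) | ∀ i, 0 ≤ x i} L Ψ = {0} ∧
    UboundR {x : EuclideanSpace ℝ (Fin p) | ∀ i, 0 ≤ x i} L Ψ =
      sInf (ENNReal.ofReal '' {r : ℝ | ∃ a : EuclideanSpace ℝ (Fin p), (∀ i, a i ≤ 0) ∧
        r = rnormInf (Ψ⁻¹.mulVec fun i => gradL 0 i + a i)}) ∧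
    ((∀ i, 0 ≤ gradL 0 i) →
      UboundR {x : EuclideanSpace ℝ (Fin p) | ∀ i, 0 ≤ x i} L Ψ = 0) ∧
    (Ψ = 1 →
      UboundR {x : EuclideanSpace ℝ (Fin p) | ∀ i, 0 ≤ x i} L Ψ =
        ENNReal.ofReal (-min 0 (⨅ i, gradL 0 i))) := by
  have hQ := QSetR_eq_singleton_zero zero_mem_orthant fun x => (psiT_eq_zero_iff hΨ).mp
  have hchar := fun u (hu : 0 ≤ u) => zero_mem_XuSetR_orthant_iff hΨ hLcv (hLd 0) hu
  have hU : UboundR {x : EuclideanSpace ℝ (Fin p) | ∀ i, 0 ≤ x i} L Ψ =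
      sInf (ENNReal.ofReal '' {r : ℝ | ∃ a : EuclideanSpace ℝ (Fin p), (∀ i, a i ≤ 0) ∧
        r = rnormInf (Ψ⁻¹.mulVec fun i => gradL 0 i + a i)}) := by
    rw [UboundR_eq_of_QSetR_eq_singleton hQ]
    refine sInf_ofReal_image_eq_of_forall_exists_le ?_ fun u ⟨hu, h0⟩ => ?_
    · rintro _ ⟨a, ha, rfl⟩
      exact ⟨rnormInf_nonneg _, (hchar _ (rnormInf_nonneg _)).mpr ⟨a, ha, le_rfl⟩⟩
    · obtain ⟨a, ha, hle⟩ := (hchar u hu).mp h0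
      exact ⟨_, ⟨a, ha, rfl⟩, hle⟩
  refine ⟨hQ, XdSetR_eq_of_QSetR_eq_singleton hQ, hU, fun hg => ?_, fun hΨ1 => ?_⟩
  · rw [hU]
    refine le_antisymm (sInf_le ⟨0, ⟨-gradL 0, fun i => by simpa using hg i, ?_⟩,
      ENNReal.ofReal_zero⟩) bot_le
    simp [← Pi.zero_def]
  · subst hΨ1
    simp only [hU, inv_one, one_mulVec]
    exact (ENNReal.ofReal_mono.map_isLeast (isLeast_rnormInf_add_nonpos (gradL 0))).csInf_eq

theorem statement_14 {p : ℕ} (hp : 0 < p)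
    (Ψ : Matrix (Fin p) (Fin p) ℝ) (hΨ : IsUnit Ψ.det)
    (L : EuclideanSpace ℝ (Fin p) → ℝ) (hLcv : ConvexOn ℝ Set.univ L)
    (gradL : EuclideanSpace ℝ (Fin p) → EuclideanSpace ℝ (Fin p))
    (hLd : ∀ x, HasGradientAt L (gradL x) x)
    (hLb : BddBelow (L '' {x : EuclideanSpace ℝ (Fin p) | ∀ i, 0 ≤ x i})) :
    QSetR {x : EuclideanSpace ℝ (Fin p) | ∀ i, 0 ≤ x i} Ψ = {0} ∧
    XdSetR {x : EuclideanSpace ℝ (Fin p) | ∀ i, 0 ≤ x i} L Ψ = {0} ∧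
    UboundR {x : EuclideanSpace ℝ (Fin p) | ∀ i, 0 ≤ x i} L Ψ =
      sInf (ENNReal.ofReal '' {r : ℝ | ∃ a : EuclideanSpace ℝ (Fin p), (∀ i, a i ≤ 0) ∧
        r = rnormInf (Ψ⁻¹.mulVec fun i => gradL 0 i + a i)}) ∧
    ((∀ i, 0 ≤ gradL 0 i) →
      UboundR {x : EuclideanSpace ℝ (Fin p) | ∀ i, 0 ≤ x i} L Ψ = 0) ∧
    (Ψ = 1 →
      UboundR {x : EuclideanSpace ℝ (Fin p) | ∀ i, 0 ≤ x i} L Ψ =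
        ENNReal.ofReal (-min 0 (⨅ i, gradL 0 i))) :=
  statement_14_general Ψ hΨ L hLcv gradL hLd
end
end

section
/- (Factorization identities) Let Ψ be a complex p × p' matrix factored as Ψ = F Z, where F is a real p × d matrix of rank d and Z is a complex d × p' matrix whose real d × 2p' matrix [Re Z Im Z] has rank d. Then: (i) the real d × d matrix Re(Z Z^H) is invertible, so Z^‡ = Z^H (Re(Z Z^H))⁻¹ is well defined; (ii) Re(Ψ Z^‡) = F; and (iii) the column space of F equals Re(R(Ψ)) = {Re(Ψ w) : w ∈ ℂ^{p'}}. -/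
/-!
Writing `M = Re (Z Zᴴ)`, one has `M = A Aᵀ` for the real matrix `A = [Re Z  Im Z]`, so `M` has the
rank `d` of `A` and is invertible. Since `F` is real, `Re (F Z X) = F · Re (Z X)` for every complex
`X`, and `Re (Z Zᴴ M⁻¹) = M M⁻¹ = 1` gives (ii). For (iii), `Re (Ψ w) = F (Re (Z w))` shows one
inclusion, and (ii) shows that `F c = Re (Ψ Z^‡ c)` for real `c`.
-/

open Matrix Complex

noncomputable section

namespace Matrix

variable {l m n : Type*}

lemma isUnit_det_of_rank_eq_card_s18 {K : Type*} [Field K] [Fintype n] [DecidableEq n]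
    {A : Matrix n n K} (h : A.rank = Fintype.card n) : IsUnit A.det := by
  have hrange : LinearMap.range A.mulVecLin = ⊤ := by
    apply Submodule.eq_top_of_finrank_eq
    rw [show Module.finrank K (LinearMap.range A.mulVecLin) = A.rank from rfl, h,
      Module.finrank_fintype_fun_eq_card]
  rw [← isUnit_iff_isUnit_det, ← mulVec_surjective_iff_isUnit]
  exact LinearMap.range_eq_top.mp hrange

section Fintype

variable [Fintype m]

lemma map_re_ofReal_mul (F : Matrix l m ℝ) (C : Matrix m n ℂ) :
    (F.map ofReal * C).map re = F * C.map re := by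
  ext i j
  simp [mul_apply, re_sum]

lemma map_re_mul_ofReal (C : Matrix l m ℂ) (G : Matrix m n ℝ) :
    (C * G.map ofReal).map re = C.map re * G := by
  ext i j
  simp [mul_apply, re_sum]

lemma re_mulVec_ofReal_s18 (C : Matrix l m ℂ) (c : m → ℝ) :
    (fun i => (C *ᵥ fun j => (c j : ℂ)) i |>.re) = C.map re *ᵥ c := by
  ext i
  simp [mulVec, dotProduct, re_sum]

lemma re_ofReal_mulVec_s18 (F : Matrix l m ℝ) (v : m → ℂ) :
    (fun i => (F.map ofReal *ᵥ v) i |>.re) = F *ᵥ fun k => (v k).re := by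
  ext i
  simp [mulVec, dotProduct, re_sum]

end Fintype

variable [Fintype n]

lemma map_re_mul_conjTranspose (Z : Matrix m n ℂ) :
    (Z * Zᴴ).map re =
      fromCols (Z.map re) (Z.map im) * (fromCols (Z.map re) (Z.map im))ᵀ := by
  rw [transpose_fromCols, fromCols_mul_fromRows]
  ext i j
  simp [mul_apply, re_sum, Finset.sum_add_distrib]

lemma isUnit_det_map_re_mul_conjTranspose [Fintype m] [DecidableEq m] {Z : Matrix m n ℂ}
    (hZ : (fromCols (Z.map re) (Z.map im)).rank = Fintype.card m) :
    IsUnit ((Z * Zᴴ).map re).det := by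
  apply isUnit_det_of_rank_eq_card_s18
  rw [map_re_mul_conjTranspose, rank_self_mul_transpose, hZ]

lemma map_re_ofReal_mul_mul_pseudoinverse [Fintype m] [DecidableEq m]
    (F : Matrix l m ℝ) {Z : Matrix m n ℂ} (hZ : IsUnit ((Z * Zᴴ).map re).det) :
    (F.map ofReal * Z * (Zᴴ * ((Z * Zᴴ).map re)⁻¹.map ofReal)).map re = F := by
  rw [Matrix.mul_assoc, ← Matrix.mul_assoc Z, ← Matrix.mul_assoc, Matrix.mul_assoc (F.map ofReal),
    map_re_ofReal_mul, map_re_mul_ofReal, mul_nonsing_inv _ hZ, Matrix.mul_one]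

lemma range_mulVec_eq_range_re_ofReal_mul_mulVec [Fintype m] {F : Matrix l m ℝ}
    {Z : Matrix m n ℂ} (G : Matrix n m ℂ) (hG : (F.map ofReal * Z * G).map re = F) :
    Set.range F.mulVec = Set.range fun w => fun i => ((F.map ofReal * Z) *ᵥ w) i |>.re := by
  apply Set.Subset.antisymm
  · rintro _ ⟨c, rfl⟩
    refine ⟨G *ᵥ fun j => (c j : ℂ), ?_⟩
    simp only [mulVec_mulVec]
    rw [re_mulVec_ofReal_s18, hG]
  · rintro _ ⟨w, rfl⟩
    refine ⟨fun k => ((Z *ᵥ w) k).re, ?_⟩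
    simp only [← mulVec_mulVec]
    rw [re_ofReal_mulVec_s18]

end Matrix

theorem statement_18_general {p p' d : ℕ}
    (Ψ : Matrix (Fin p) (Fin p') ℂ)
    (F : Matrix (Fin p) (Fin d) ℝ) (Z : Matrix (Fin d) (Fin p') ℂ)
    (hfac : Ψ = F.map Complex.ofReal * Z)
    (hZ : (Matrix.fromCols (Z.map Complex.re) (Z.map Complex.im)).rank = d) :
    IsUnit ((Z * Zᴴ).map Complex.re).det ∧
    (Ψ * (Zᴴ * (((Z * Zᴴ).map Complex.re)⁻¹.map Complex.ofReal))).map Complex.re = F ∧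
    {v : Fin p → ℝ | ∃ c : Fin d → ℝ, F.mulVec c = v} =
      {v : Fin p → ℝ | ∃ w : Fin p' → ℂ, (fun i => (Ψ.mulVec w i).re) = v} := by
  subst hfac
  have hunit : IsUnit ((Z * Zᴴ).map re).det :=
    isUnit_det_map_re_mul_conjTranspose (by rw [hZ, Fintype.card_fin])
  have hpinv := map_re_ofReal_mul_mul_pseudoinverse F hunit
  exact ⟨hunit, hpinv, range_mulVec_eq_range_re_ofReal_mul_mulVec _ hpinv⟩

theorem statement_18 {p p' d : ℕ} (hp : 0 < p) (hp' : 0 < p') (hd : 0 < d)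
    (Ψ : Matrix (Fin p) (Fin p') ℂ)
    (F : Matrix (Fin p) (Fin d) ℝ) (Z : Matrix (Fin d) (Fin p') ℂ)
    (hfac : Ψ = F.map Complex.ofReal * Z)
    (hF : F.rank = d)
    (hZ : (Matrix.fromCols (Z.map Complex.re) (Z.map Complex.im)).rank = d) :
    IsUnit ((Z * Zᴴ).map Complex.re).det ∧
    (Ψ * (Zᴴ * (((Z * Zᴴ).map Complex.re)⁻¹.map Complex.ofReal))).map Complex.re = F ∧
    {v : Fin p → ℝ | ∃ c : Fin d → ℝ, F.mulVec c = v} =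
      {v : Fin p → ℝ | ∃ w : Fin p' → ℂ, (fun i => (Ψ.mulVec w i).re) = v} :=
  statement_18_general Ψ F Z hfac hZ
end
end
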